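/- arXiv:2310.04599 — 2 statements merged into one kernel-verified Lean document; each statement's English description precedes it below -/
import Mathlib

section
/- Let Φ be a quantum channel with Kraus operators (V_i), and suppose M is an orthogonal projector commuting with each V_i. If the quantum trajectory is defined by ρ_{n+1} = V_{i_n} ρ_n V_{i_n}† / tr(V_{i_n} ρ_n V_{i_n}†) with outcome i chosen with probability tr(V_i ρ_n V_i†), then (tr(M ρ_n))_n is a bounded martingale; in particular E[tr(M ρ_n)] = tr(M ρ_0) for all n. -/
open Matrix BigOperators
open scoped ComplexOrder

/-- The operator V_I = V_{i_n} ⋯ V_{i_1} associated to a word I = (i_1, …, i_n). -/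
noncomputable def wordOp {d : ℕ} {O : Type*} (V : O → Matrix (Fin d) (Fin d) ℂ)
    {n : ℕ} (I : Fin n → O) : Matrix (Fin d) (Fin d) ℂ :=
  (List.ofFn fun k => V (I k)).reverse.prod

/-!
The weight `tr(V_I ρ₀ V_I†)` of an outcome word cancels the normalisation of the posterior
state, so the expectation of `tr(M ρₙ)` is `tr(M Φⁿ(ρ₀)) = tr(Φ*ⁿ(M) ρ₀)`, where
`Φ*(X) = ∑ᵢ Vᵢ† X Vᵢ` is the dual channel. Since `M` commutes with the `Vᵢ`,
`Φ*(M) = (∑ᵢ Vᵢ† Vᵢ) M = M`. Boundedness holds because `tr(Mρ)` and `tr((1 - M)ρ)` are the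
traces of the positive matrices `MρM` and `(1 - M)ρ(1 - M)`.
-/

namespace Matrix

variable {n : Type*} [Fintype n]

-- If `tr A = 0` then `A = 0`, so the junk value `0⁻¹ = 0` is harmless.
lemma PosSemidef.trace_re_mul_trace_re_mul_inv_smul {A : Matrix n n ℂ} (hA : A.PosSemidef)
    (M : Matrix n n ℂ) : A.trace.re * (M * (A.trace.re⁻¹ • A)).trace.re = (M * A).trace.re := by
  rw [Matrix.mul_smul, trace_smul, Complex.real_smul, Complex.re_ofReal_mul, ← mul_assoc]
  rcases eq_or_ne A.trace.re 0 with h | h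
  · have htrace : A.trace = 0 := Complex.ext h (Complex.nonneg_iff.mp hA.trace_nonneg).2.symm
    simp [hA.trace_eq_zero_iff.mp htrace]
  · rw [mul_inv_cancel₀ h, one_mul]

lemma trace_mul_mul_mul_conjTranspose {R : Type*} [CommSemiring R] [StarRing R]
    (M W σ : Matrix n n R) :
    (M * (W * σ * Wᴴ)).trace = (Wᴴ * M * W * σ).trace := by
  rw [show Wᴴ * M * W * σ = Wᴴ * (M * W * σ) by simp only [Matrix.mul_assoc], trace_mul_comm Wᴴ]
  simp only [Matrix.mul_assoc]

lemma sum_trace_re_mul_trace_re_mul_inv_smul_conj {ι : Type*} [Fintype ι]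
    (W : ι → Matrix n n ℂ) (M : Matrix n n ℂ) {σ : Matrix n n ℂ} (hσ : σ.PosSemidef) :
    ∑ k, (W k * σ * (W k)ᴴ).trace.re *
        (M * ((W k * σ * (W k)ᴴ).trace.re⁻¹ • (W k * σ * (W k)ᴴ))).trace.re
      = ((∑ k, (W k)ᴴ * M * W k) * σ).trace.re := by
  simp only [(hσ.mul_mul_conjTranspose_same _).trace_re_mul_trace_re_mul_inv_smul,
    trace_mul_mul_mul_conjTranspose, Finset.sum_mul, trace_sum, Complex.re_sum]

lemma sum_conjTranspose_mul_mul_eq_self_of_commute {R ι : Type*} [Semiring R] [StarRing R]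
    [Fintype ι] [DecidableEq n] {V : ι → Matrix n n R} (hV : ∑ i, (V i)ᴴ * V i = 1)
    {M : Matrix n n R}
    (hComm : ∀ i, M * V i = V i * M) : ∑ i, (V i)ᴴ * M * V i = M := by
  calc ∑ i, (V i)ᴴ * M * V i = (∑ i, (V i)ᴴ * V i) * M := by
        simp only [Finset.sum_mul, Matrix.mul_assoc, hComm]
    _ = M := by rw [hV, Matrix.one_mul]

lemma trace_re_mul_nonneg_of_isIdempotentElem {P σ : Matrix n n ℂ} (hP : P.IsHermitian)
    (hPP : IsIdempotentElem P) (hσ : σ.PosSemidef) : 0 ≤ (P * σ).trace.re := by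
  have hconj : (P * σ * Pᴴ).trace = (P * σ).trace := by
    rw [hP.eq, trace_mul_comm, ← Matrix.mul_assoc, hPP.eq]
  rw [← hconj]
  exact (Complex.nonneg_iff.mp (hσ.mul_mul_conjTranspose_same P).trace_nonneg).1

end Matrix

section Words

variable {d : ℕ} {O : Type*} (V : O → Matrix (Fin d) (Fin d) ℂ)

lemma wordOp_cons {n : ℕ} (i : O) (I : Fin n → O) :
    wordOp V (Fin.cons i I : Fin (n + 1) → O) = wordOp V I * V i := by
  simp [wordOp, List.ofFn_succ]

lemma sum_wordOp_conjTranspose_mul_mul_eq_self [Fintype O] {X : Matrix (Fin d) (Fin d) ℂ}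
    (hX : ∑ i, (V i)ᴴ * X * V i = X) (n : ℕ) :
    ∑ I : Fin n → O, (wordOp V I)ᴴ * X * wordOp V I = X := by
  induction n with
  | zero => simp [wordOp]
  | succ n ih =>
    rw [← (Fin.consEquiv fun _ => O).sum_comp, Fintype.sum_prod_type]
    calc ∑ i, ∑ J : Fin n → O, (wordOp V (Fin.cons i J))ᴴ * X * wordOp V (Fin.cons i J)
        = ∑ i, (V i)ᴴ * (∑ J : Fin n → O, (wordOp V J)ᴴ * X * wordOp V J) * V i := by
          simp only [wordOp_cons, conjTranspose_mul, Finset.mul_sum, Finset.sum_mul,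
            Matrix.mul_assoc]
      _ = X := by rw [ih, hX]

end Words

theorem stmt3_general {d : ℕ} {O : Type*} [Fintype O]
    (V : O → Matrix (Fin d) (Fin d) ℂ)
    (hV : ∑ i, (V i)ᴴ * V i = 1)
    (M : Matrix (Fin d) (Fin d) ℂ)
    (hHerm : M.IsHermitian) (hProj : M * M = M)
    (hComm : ∀ i, M * V i = V i * M)
    (ρ₀ : Matrix (Fin d) (Fin d) ℂ) (hρ₀ : ρ₀.PosSemidef) :
    -- one-step martingale property, conditionally on the current state ρ'
    (∀ ρ' : Matrix (Fin d) (Fin d) ℂ, ρ'.PosSemidef → ρ'.trace = 1 →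
      ∑ i : O, (V i * ρ' * (V i)ᴴ).trace.re *
        (M * (((V i * ρ' * (V i)ᴴ).trace.re)⁻¹ • (V i * ρ' * (V i)ᴴ))).trace.re
      = (M * ρ').trace.re) ∧
    -- boundedness of the process
    (∀ ρ' : Matrix (Fin d) (Fin d) ℂ, ρ'.PosSemidef → ρ'.trace = 1 →
      0 ≤ (M * ρ').trace.re ∧ (M * ρ').trace.re ≤ 1) ∧
    -- in particular, E[tr(M ρ_n)] = tr(M ρ₀) for all n
    (∀ n : ℕ, ∑ I : Fin n → O,
      (wordOp V I * ρ₀ * (wordOp V I)ᴴ).trace.re *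
        (M * (((wordOp V I * ρ₀ * (wordOp V I)ᴴ).trace.re)⁻¹ •
          (wordOp V I * ρ₀ * (wordOp V I)ᴴ))).trace.re
      = (M * ρ₀).trace.re) := by
  have hFixed : ∑ i, (V i)ᴴ * M * V i = M := sum_conjTranspose_mul_mul_eq_self_of_commute hV hComm
  refine ⟨fun ρ hρ _ => ?_, fun ρ hρ hρ1 => ⟨?_, ?_⟩, fun n => ?_⟩
  · rw [sum_trace_re_mul_trace_re_mul_inv_smul_conj V M hρ, hFixed]
  · exact trace_re_mul_nonneg_of_isIdempotentElem hHerm hProj hρ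
  · have hCompl := trace_re_mul_nonneg_of_isIdempotentElem (isHermitian_one.sub hHerm)
      (IsIdempotentElem.one_sub hProj) hρ
    rw [Matrix.sub_mul, Matrix.one_mul, trace_sub, hρ1, Complex.sub_re, Complex.one_re] at hCompl
    linarith
  · rw [sum_trace_re_mul_trace_re_mul_inv_smul_conj (wordOp V) M hρ₀,
      sum_wordOp_conjTranspose_mul_mul_eq_self V hFixed]

/-- if M is a projector commuting with each Kraus operator, then along the
quantum trajectory (outcome i with probability tr(V_i ρ V_i†), posterior state
V_i ρ V_i† / tr(V_i ρ V_i†)), the process (tr(M ρ_n)) is a bounded martingale; in particular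
E[tr(M ρ_n)] = tr(M ρ₀) for all n.  The martingale property is expressed as: for every
density matrix ρ', the expected value of tr(M ·) after one measurement step equals tr(M ρ'),
the process is bounded in [0,1], and the expectation after n steps starting from ρ₀ equals
tr(M ρ₀). -/
theorem stmt3 {d : ℕ} {O : Type*} [Fintype O] [DecidableEq O]
    (V : O → Matrix (Fin d) (Fin d) ℂ)
    (hV : ∑ i, (V i)ᴴ * V i = 1)
    (M : Matrix (Fin d) (Fin d) ℂ)
    (hHerm : M.IsHermitian) (hProj : M * M = M)
    (hComm : ∀ i, M * V i = V i * M)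
    (ρ₀ : Matrix (Fin d) (Fin d) ℂ) (hρ₀ : ρ₀.PosSemidef) (hρ₀1 : ρ₀.trace = 1) :
    -- one-step martingale property, conditionally on the current state ρ'
    (∀ ρ' : Matrix (Fin d) (Fin d) ℂ, ρ'.PosSemidef → ρ'.trace = 1 →
      ∑ i : O, (V i * ρ' * (V i)ᴴ).trace.re *
        (M * (((V i * ρ' * (V i)ᴴ).trace.re)⁻¹ • (V i * ρ' * (V i)ᴴ))).trace.re
      = (M * ρ').trace.re) ∧
    -- boundedness of the process
    (∀ ρ' : Matrix (Fin d) (Fin d) ℂ, ρ'.PosSemidef → ρ'.trace = 1 →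
      0 ≤ (M * ρ').trace.re ∧ (M * ρ').trace.re ≤ 1) ∧
    -- in particular, E[tr(M ρ_n)] = tr(M ρ₀) for all n
    (∀ n : ℕ, ∑ I : Fin n → O,
      (wordOp V I * ρ₀ * (wordOp V I)ᴴ).trace.re *
        (M * (((wordOp V I * ρ₀ * (wordOp V I)ᴴ).trace.re)⁻¹ •
          (wordOp V I * ρ₀ * (wordOp V I)ᴴ))).trace.re
      = (M * ρ₀).trace.re) :=
  stmt3_general V hV M hHerm hProj hComm ρ₀ hρ₀
end

section
/- Let (ρ_n) be a discrete-time quantum trajectory with Kraus operators (V_i) and let M_1,…,M_ℓ be orthogonal projectors summing to the identity and each commuting with every V_i. Then the process W(ρ_n) = (1/2) Σ_{α≠β} √(tr(M_α ρ_n) tr(M_β ρ_n)) is a supermartingale: E[W(ρ_{n+1}) | ρ_n] ≤ W(ρ_n). -/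
open Matrix BigOperators
open scoped ComplexOrder

/-!
W is positively homogeneous, so the normalisation of the post-measurement state cancels
against its probability: `p_i W(σ_i / p_i) ≤ W(σ_i)` for `σ_i = V_i ρ V_i†`. It remains to show
`Σ_i W(σ_i) ≤ W(ρ)`. Because `M_α` commutes with `V_i` and `Σ_i V_i† V_i = 1`, the weights
`q_α(i) = tr(M_α σ_i) ≥ 0` satisfy `Σ_i q_α(i) = tr(M_α ρ)`, and for each pair `α ≠ β`
Cauchy–Schwarz over the outcomes gives `Σ_i √(q_α(i) q_β(i)) ≤ √(tr(M_α ρ) tr(M_β ρ))`.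
-/

/-- The Lyapunov function W(ρ) = (1/2) Σ_{α≠β} √(tr(M_α ρ) tr(M_β ρ)). -/
noncomputable def Wfun {d ℓ : ℕ} (M : Fin ℓ → Matrix (Fin d) (Fin d) ℂ)
    (ρ : Matrix (Fin d) (Fin d) ℂ) : ℝ :=
  (1 / 2 : ℝ) * ∑ α : Fin ℓ, ∑ β ∈ Finset.univ.erase α,
    Real.sqrt ((M α * ρ).trace.re * (M β * ρ).trace.re)

namespace Matrix

variable {n : Type*} [Fintype n]

lemma PosSemidef.re_trace_mul_nonneg {ρ N : Matrix n n ℂ} (hρ : ρ.PosSemidef)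
    (hN : N.IsHermitian) (hNN : N * N = N) : 0 ≤ (N * ρ).trace.re := by
  have hNρN : (N * ρ * Nᴴ).trace = (N * ρ).trace := by
    rw [hN.eq, trace_mul_cycle, hNN]
  rw [← hNρN]
  exact Complex.nonneg_iff.mp (hρ.mul_mul_conjTranspose_same N).trace_nonneg |>.1

lemma sum_trace_mul_kraus [DecidableEq n] {O : Type*} [Fintype O] {V : O → Matrix n n ℂ}
    (hV : ∑ i, (V i)ᴴ * V i = 1) {N : Matrix n n ℂ} (hN : ∀ i, N * V i = V i * N)
    (ρ : Matrix n n ℂ) : ∑ i, (N * (V i * ρ * (V i)ᴴ)).trace = (N * ρ).trace := by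
  have hcycle : ∀ i, (N * (V i * ρ * (V i)ᴴ)).trace = ((V i)ᴴ * V i * (N * ρ)).trace := by
    intro i
    rw [← mul_assoc, ← mul_assoc, hN i, trace_mul_cycle, mul_assoc, mul_assoc, mul_assoc]
  simp_rw [hcycle, ← trace_sum, ← Finset.sum_mul, hV, one_mul]

end Matrix

lemma Real.sum_sqrt_mul_le_sqrt_mul_sum {ι : Type*} (s : Finset ι) {f g : ι → ℝ}
    (hf : ∀ i, 0 ≤ f i) (hg : ∀ i, 0 ≤ g i) :
    ∑ i ∈ s, √(f i * g i) ≤ √((∑ i ∈ s, f i) * ∑ i ∈ s, g i) := by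
  simp_rw [Real.sqrt_mul (hf _), Real.sqrt_mul (Finset.sum_nonneg fun i _ => hf i)]
  exact Real.sum_sqrt_mul_sqrt_le s hf hg

section Wfun

variable {d ℓ : ℕ} (M : Fin ℓ → Matrix (Fin d) (Fin d) ℂ)

lemma Wfun_nonneg (ρ : Matrix (Fin d) (Fin d) ℂ) : 0 ≤ Wfun M ρ := by
  unfold Wfun
  positivity

lemma Wfun_smul {t : ℝ} (ht : 0 ≤ t) (ρ : Matrix (Fin d) (Fin d) ℂ) :
    Wfun M (t • ρ) = t * Wfun M ρ := by
  have hre : ∀ α, (M α * (t • ρ)).trace.re = t * (M α * ρ).trace.re := fun α => by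
    rw [mul_smul_comm, trace_smul, Complex.real_smul, Complex.re_ofReal_mul]
  have hsqrt : ∀ a b : ℝ, √(t * a * (t * b)) = t * √(a * b) := fun a b => by
    rw [show t * a * (t * b) = t ^ 2 * (a * b) by ring, Real.sqrt_mul (sq_nonneg t),
      Real.sqrt_sq ht]
  simp only [Wfun, hre, hsqrt, ← Finset.mul_sum]
  ring

lemma mul_Wfun_inv_smul_le {c : ℝ} (hc : 0 ≤ c) (σ : Matrix (Fin d) (Fin d) ℂ) :
    c * Wfun M (c⁻¹ • σ) ≤ Wfun M σ := by
  rcases hc.eq_or_lt with rfl | hc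
  · simpa using Wfun_nonneg M σ
  · rw [Wfun_smul M (inv_nonneg.mpr hc.le), mul_inv_cancel_left₀ hc.ne']

lemma sum_Wfun_kraus_le {O : Type*} [Fintype O] {V : O → Matrix (Fin d) (Fin d) ℂ}
    (hV : ∑ i, (V i)ᴴ * V i = 1) (hHerm : ∀ α, (M α).IsHermitian)
    (hProj : ∀ α, M α * M α = M α) (hComm : ∀ α i, M α * V i = V i * M α)
    {ρ : Matrix (Fin d) (Fin d) ℂ} (hρ : ρ.PosSemidef) :
    ∑ i, Wfun M (V i * ρ * (V i)ᴴ) ≤ Wfun M ρ := by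
  set q : Fin ℓ → O → ℝ := fun α i => (M α * (V i * ρ * (V i)ᴴ)).trace.re
  have hq_nonneg : ∀ α i, 0 ≤ q α i := fun α i =>
    (hρ.mul_mul_conjTranspose_same (V i)).re_trace_mul_nonneg (hHerm α) (hProj α)
  have hq_sum : ∀ α, ∑ i, q α i = (M α * ρ).trace.re := fun α => by
    rw [← Complex.re_sum, sum_trace_mul_kraus hV (hComm α)]
  calc ∑ i, Wfun M (V i * ρ * (V i)ᴴ)
      = (1 / 2 : ℝ) * ∑ α, ∑ β ∈ Finset.univ.erase α, ∑ i, √(q α i * q β i) := by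
        simp only [Wfun, ← Finset.mul_sum]
        rw [Finset.sum_comm]
        exact congrArg _ (Finset.sum_congr rfl fun α _ => Finset.sum_comm)
    _ ≤ Wfun M ρ := by
        unfold Wfun
        gcongr with α _ β _
        rw [← hq_sum, ← hq_sum]
        exact Real.sum_sqrt_mul_le_sqrt_mul_sum _ (hq_nonneg α) (hq_nonneg β)

end Wfun

theorem stmt4_general {d ℓ : ℕ} {O : Type*} [Fintype O]
    (V : O → Matrix (Fin d) (Fin d) ℂ)
    (hV : ∑ i, (V i)ᴴ * V i = 1)
    (M : Fin ℓ → Matrix (Fin d) (Fin d) ℂ)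
    (hHerm : ∀ α, (M α).IsHermitian) (hProj : ∀ α, M α * M α = M α)
    (hComm : ∀ α i, M α * V i = V i * M α) :
    ∀ ρ : Matrix (Fin d) (Fin d) ℂ, ρ.PosSemidef → ρ.trace = 1 →
      ∑ i : O, (V i * ρ * (V i)ᴴ).trace.re *
          Wfun M (((V i * ρ * (V i)ᴴ).trace.re)⁻¹ • (V i * ρ * (V i)ᴴ))
        ≤ Wfun M ρ := by
  intro ρ hρ _
  calc _ ≤ ∑ i, Wfun M (V i * ρ * (V i)ᴴ) := Finset.sum_le_sum fun i _ =>
        mul_Wfun_inv_smul_le M (Complex.nonneg_iff.mp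
          (hρ.mul_mul_conjTranspose_same (V i)).trace_nonneg).1 _
    _ ≤ Wfun M ρ := sum_Wfun_kraus_le M hV hHerm hProj hComm hρ

/-- With orthogonal projectors M_1,…,M_ℓ summing to the identity and commuting
with every Kraus operator, the process W(ρ_n) is a supermartingale:
E[W(ρ_{n+1}) | ρ_n] ≤ W(ρ_n), expressed conditionally on the current state ρ. -/
theorem stmt4 {d ℓ : ℕ} {O : Type*} [Fintype O]
    (V : O → Matrix (Fin d) (Fin d) ℂ)
    (hV : ∑ i, (V i)ᴴ * V i = 1)
    (M : Fin ℓ → Matrix (Fin d) (Fin d) ℂ)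
    (hHerm : ∀ α, (M α).IsHermitian) (hProj : ∀ α, M α * M α = M α)
    (hSum : ∑ α, M α = 1)
    (hComm : ∀ α i, M α * V i = V i * M α) :
    ∀ ρ : Matrix (Fin d) (Fin d) ℂ, ρ.PosSemidef → ρ.trace = 1 →
      ∑ i : O, (V i * ρ * (V i)ᴴ).trace.re *
          Wfun M (((V i * ρ * (V i)ᴴ).trace.re)⁻¹ • (V i * ρ * (V i)ᴴ))
        ≤ Wfun M ρ :=
  stmt4_general V hV M hHerm hProj hComm
end
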